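/- For every n ≥ 0, the (n+1)×(n+1) matrix with (i,j) entry ((1+(−1)^{i+j})/(2√π)) · Γ((i+j+1)/2) is invertible, and its inverse has (i,j) entry β_{ij} = Σ_{k=max(i,j)}^{n} 2^{i+j} · C(k,i) · C(k,j) · H_{k−i}(0) · H_{k−j}(0) / (k! · 2^k), where C(k,i) is the binomial coefficient and H_m(0) denotes the value of the m-th Hermite polynomial at 0, namely H_m(0) = (−1)^{m/2} · m!/(m/2)! if m is even and H_m(0) = 0 if m is odd. -/

import Mathlib

/-- The value of the `m`-th (physicists') Hermite polynomial at `0`: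
`H_m(0) = (-1)^(m/2) * m! / (m/2)!` for even `m`, and `0` for odd `m`. -/
noncomputable def hermiteZero (m : ℕ) : ℝ :=
  if Even m then (-1 : ℝ) ^ (m / 2) * (Nat.factorial m : ℝ) / (Nat.factorial (m / 2) : ℝ)
  else 0

/-!
The matrix is the Hankel matrix `M = (μ_{i+j})` of the Gaussian moments
`μ_m = ∫ x^m e^{-x²} dx / √π`. Let `A` be the lower triangular matrix of coefficients of
`H_0, …, H_n` (diagonal `2^k`). Orthogonality of the Hermite polynomials reads
`A M Aᵀ = diag(2^k k!)`, hence `M⁻¹ = Aᵀ diag(2^k k!)⁻¹ A`, and its entries are the stated sums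
because `H_k' = 2k H_{k-1}` makes the Taylor coefficient of `x^l` in `H_k` equal to
`2^l C(k,l) H_{k-l}(0)`.

No integral is needed: the functional `L p = ∑ pₘ μₘ` enters only through the Gaussian
integration by parts `L(p') = 2 L(X p)`, which on monomials is `Γ(s + 1) = s Γ(s)`. Together with
`H_{k+1} = 2X H_k - H_k'` it gives `L(q H_k) = L(q⁽ᵏ⁾)`, whence orthogonality.
-/
open Polynomial Matrix

theorem IsUnit.mul_mul_mul_eq_one_of_mul_mul_eq {M : Type*} [Monoid M] {a m b d e : M}
    (ha : IsUnit a) (h : a * m * b = d) (hd : d * e = 1) : m * (b * e * a) = 1 :=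
  ha.mul_left_cancel <| calc
    a * (m * (b * e * a)) = a * m * b * e * a := by simp only [mul_assoc]
    _ = a * 1 := by rw [h, hd, one_mul, mul_one]

section Moments

variable {R : Type*} [CommSemiring R]

noncomputable def momentFunctional (c : ℕ → R) : R[X] →ₗ[R] R :=
  lsum fun m => c m • LinearMap.id

theorem momentFunctional_monomial (c : ℕ → R) (m : ℕ) (a : R) :
    momentFunctional c (monomial m a) = c m * a := by
  simp [momentFunctional, sum_monomial_index]

theorem momentFunctional_mul {n : ℕ} (c : ℕ → R) {p q : R[X]} (hp : p.natDegree < n)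
    (hq : q.natDegree < n) :
    momentFunctional c (p * q) = ∑ i : Fin n, ∑ j : Fin n, p.coeff i * c (i + j) * q.coeff j := by
  conv_lhs => rw [as_sum_range' p n hp, as_sum_range' q n hq]
  simp only [Finset.sum_mul_sum, map_sum, monomial_mul_monomial, momentFunctional_monomial,
    Finset.sum_range]
  exact Finset.sum_congr rfl fun i _ => Finset.sum_congr rfl fun j _ => by ring

theorem coeffMatrix_mul_hankel_mul_transpose {n : ℕ} (c : ℕ → R) (P : Fin n → R[X])
    (hP : ∀ k, (P k).natDegree < n) :
    of (fun k l : Fin n => (P k).coeff l) * of (fun i j : Fin n => c (i + j)) *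
        (of fun k l : Fin n => (P k).coeff l)ᵀ =
      of fun k m => momentFunctional c (P k * P m) := by
  ext k m
  simp only [mul_apply, transpose_apply, of_apply, Finset.sum_mul,
    momentFunctional_mul c (hP k) (hP m)]
  exact Finset.sum_comm

end Moments

section Gaussian

open Real

noncomputable def gaussianMoment (m : ℕ) : ℝ :=
  (1 + (-1) ^ m) / (2 * √π) * Real.Gamma ((m + 1) / 2)

theorem gaussianMoment_zero : gaussianMoment 0 = 1 := by
  have : √π ≠ 0 := by positivity
  norm_num [gaussianMoment, Real.Gamma_one_half_eq]
  field_simp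

theorem gaussianMoment_one : gaussianMoment 1 = 0 := by
  simp [gaussianMoment]

theorem gaussianMoment_add_two (m : ℕ) :
    2 * gaussianMoment (m + 2) = (m + 1) * gaussianMoment m := by
  have hΓ : Real.Gamma (((m + 2 : ℕ) + 1 : ℝ) / 2) = (m + 1) / 2 * Real.Gamma ((m + 1) / 2) := by
    rw [← Real.Gamma_add_one (by positivity)]
    congr 1
    push_cast
    ring
  rw [gaussianMoment, gaussianMoment, hΓ, pow_add]
  ring

noncomputable def gaussianFunctional : ℝ[X] →ₗ[ℝ] ℝ :=
  momentFunctional gaussianMoment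

theorem gaussianFunctional_derivative (p : ℝ[X]) :
    gaussianFunctional (derivative p) = 2 * gaussianFunctional (X * p) := by
  induction p using Polynomial.induction_on' with
  | add p q hp hq => simp only [map_add, hp, hq, mul_add]
  | monomial m a =>
    rw [derivative_monomial, X_mul_monomial, gaussianFunctional, momentFunctional_monomial,
      momentFunctional_monomial]
    cases m with
    | zero => simp [gaussianMoment_one]
    | succ m =>
      rw [add_tsub_cancel_right, add_assoc, one_add_one_eq_two]
      push_cast
      linear_combination a * (gaussianMoment_add_two m).symm

end Gaussian

noncomputable def physHermite : ℕ → ℝ[X]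
  | 0 => 1
  | k + 1 => 2 * X * physHermite k - derivative (physHermite k)

@[simp] theorem physHermite_zero : physHermite 0 = 1 := rfl

theorem physHermite_succ (k : ℕ) :
    physHermite (k + 1) = 2 * X * physHermite k - derivative (physHermite k) := rfl

theorem derivative_physHermite_succ (k : ℕ) :
    derivative (physHermite (k + 1)) = (2 * (k + 1) : ℝ) • physHermite k := by
  induction k with
  | zero => simp [physHermite_succ, smul_eq_C_mul, C_ofNat]
  | succ k ih =>
    rw [physHermite_succ (k + 1), derivative_sub, derivative_mul, derivative_mul, ih,
      derivative_smul, physHermite_succ k]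
    simp only [derivative_ofNat, derivative_X, smul_eq_C_mul, map_mul, map_add, map_natCast,
      map_one, map_ofNat]
    push_cast
    ring

theorem derivative_physHermite (k : ℕ) :
    derivative (physHermite k) = (2 * k : ℝ) • physHermite (k - 1) := by
  cases k with
  | zero => simp
  | succ k => simp [derivative_physHermite_succ]

theorem iterate_derivative_physHermite (k l : ℕ) :
    derivative^[l] (physHermite k) = (2 ^ l * k.descFactorial l : ℝ) • physHermite (k - l) := by
  induction l with
  | zero => simp
  | succ l ih =>
    rw [Function.iterate_succ_apply', ih, derivative_smul, derivative_physHermite, smul_smul,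
      Nat.descFactorial_succ, Nat.sub_sub]
    congr 1
    push_cast
    ring

theorem hermiteZero_add_two (m : ℕ) :
    hermiteZero (m + 2) = -(2 * (m + 1)) * hermiteZero m := by
  rcases Nat.even_or_odd m with ⟨r, rfl⟩ | hodd
  · have hfac : (r + r + 2).factorial = (2 * r + 2) * (2 * r + 1) * (r + r).factorial := by
      rw [Nat.factorial_succ, Nat.factorial_succ]; ring
    have h2 : (r + r + 2) / 2 = r + 1 := by omega
    have h1 : (r + r) / 2 = r := by omega
    rw [hermiteZero, hermiteZero, if_pos ⟨r + 1, by ring⟩, if_pos ⟨r, rfl⟩, h1, h2, hfac,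
      Nat.factorial_succ]
    push_cast
    field_simp
    ring
  · have hodd' : ¬Even (m + 2) := by simpa [Nat.even_add] using Nat.not_even_iff_odd.mpr hodd
    simp [hermiteZero, hodd', Nat.not_even_iff_odd.mpr hodd]

theorem coeff_zero_physHermite (m : ℕ) : (physHermite m).coeff 0 = hermiteZero m := by
  induction m using Nat.twoStepInduction with
  | zero => simp [hermiteZero]
  | one => simp [physHermite_succ, hermiteZero]
  | more m ih _ =>
    rw [physHermite_succ, coeff_sub, mul_assoc, coeff_ofNat_mul, coeff_X_mul_zero,
      derivative_physHermite_succ, coeff_smul, ih, hermiteZero_add_two]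
    simp

theorem coeff_physHermite (k l : ℕ) :
    (physHermite k).coeff l = 2 ^ l * k.choose l * hermiteZero (k - l) := by
  have h := coeff_iterate_derivative (k := l) (physHermite k) 0
  rw [iterate_derivative_physHermite, coeff_smul, coeff_zero_physHermite, zero_add,
    Nat.descFactorial_self, Nat.descFactorial_eq_factorial_mul_choose, nsmul_eq_mul,
    smul_eq_mul] at h
  have : (l.factorial : ℝ) ≠ 0 := by positivity
  push_cast at h
  apply mul_left_cancel₀ this
  linear_combination -h

theorem natDegree_physHermite_le (k : ℕ) : (physHermite k).natDegree ≤ k :=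
  natDegree_le_iff_coeff_eq_zero.mpr fun l hl => by
    simp [coeff_physHermite, Nat.choose_eq_zero_of_lt (Nat.cast_lt.mp hl)]

theorem gaussianFunctional_mul_physHermite (q : ℝ[X]) (k : ℕ) :
    gaussianFunctional (q * physHermite k) = gaussianFunctional (derivative^[k] q) := by
  induction k generalizing q with
  | zero => simp
  | succ k ih =>
    have hibp : gaussianFunctional (q * (2 * X * physHermite k)) =
        gaussianFunctional (derivative (q * physHermite k)) := by
      have : q * (2 * X * physHermite k) = (2 : ℝ) • (X * (q * physHermite k)) := by
        rw [smul_eq_C_mul, C_ofNat]; ring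
      rw [this, map_smul, smul_eq_mul, gaussianFunctional_derivative]
    rw [physHermite_succ, mul_sub, map_sub, hibp, derivative_mul, map_add, add_sub_cancel_right,
      ih, Function.iterate_succ_apply]

theorem gaussianFunctional_physHermite (k : ℕ) :
    gaussianFunctional (physHermite k) = if k = 0 then 1 else 0 := by
  rw [← one_mul (physHermite k), gaussianFunctional_mul_physHermite]
  rcases Nat.eq_zero_or_pos k with rfl | hk
  · rw [Function.iterate_zero_apply, ← monomial_zero_one, gaussianFunctional,
      momentFunctional_monomial, gaussianMoment_zero]
    simp
  · simp [iterate_derivative_one hk, hk.ne']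

theorem gaussianFunctional_physHermite_mul_physHermite (k m : ℕ) :
    gaussianFunctional (physHermite k * physHermite m) =
      if k = m then (2 ^ k * k.factorial : ℝ) else 0 := by
  rw [gaussianFunctional_mul_physHermite, iterate_derivative_physHermite, map_smul,
    gaussianFunctional_physHermite, smul_eq_mul]
  rcases lt_trichotomy k m with h | rfl | h
  · simp [Nat.descFactorial_eq_zero_iff_lt.mpr h, h.ne]
  · simp [Nat.descFactorial_self]
  · simp [Nat.sub_ne_zero_of_lt h, h.ne']

noncomputable def physHermiteCoeffMatrix (n : ℕ) : Matrix (Fin n) (Fin n) ℝ :=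
  of fun k l => (physHermite k).coeff l

theorem physHermiteCoeffMatrix_isUnit (n : ℕ) : IsUnit (physHermiteCoeffMatrix n) := by
  have hlower : (physHermiteCoeffMatrix n).IsLowerTriangular := fun k l (hkl : k < l) => by
    simp [physHermiteCoeffMatrix, coeff_physHermite, Nat.choose_eq_zero_of_lt hkl]
  rw [isUnit_iff_isUnit_det, det_of_isLowerTriangular _ hlower]
  refine IsUnit.mk0 _ (Finset.prod_ne_zero_iff.mpr fun k _ => ?_)
  simp [physHermiteCoeffMatrix, coeff_physHermite, hermiteZero]

theorem physHermiteCoeffMatrix_mul_gaussianMoment_mul_transpose (n : ℕ) :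
    physHermiteCoeffMatrix n * of (fun i j : Fin n => gaussianMoment (i + j)) *
        (physHermiteCoeffMatrix n)ᵀ =
      diagonal fun k : Fin n => (2 ^ (k : ℕ) * (k : ℕ).factorial : ℝ) := by
  rw [physHermiteCoeffMatrix, coeffMatrix_mul_hankel_mul_transpose _ _
    fun k => (natDegree_physHermite_le k).trans_lt k.isLt]
  ext k m
  rw [of_apply, ← gaussianFunctional, gaussianFunctional_physHermite_mul_physHermite,
    diagonal_apply]
  simp only [Fin.val_inj]

theorem transpose_physHermiteCoeffMatrix_mul_diagonal_mul (n : ℕ) :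
    (physHermiteCoeffMatrix (n + 1))ᵀ *
        diagonal (fun k : Fin (n + 1) => (2 ^ (k : ℕ) * (k : ℕ).factorial : ℝ)⁻¹) *
        physHermiteCoeffMatrix (n + 1) =
      of fun i j : Fin (n + 1) => ∑ k ∈ Finset.Icc (max (i : ℕ) (j : ℕ)) n,
        (2 : ℝ) ^ ((i : ℕ) + (j : ℕ)) * (k.choose i : ℝ) * (k.choose j : ℝ) *
          hermiteZero (k - i) * hermiteZero (k - j) / ((Nat.factorial k : ℝ) * 2 ^ k) := by
  ext i j
  have hsub : Finset.Icc (max (i : ℕ) (j : ℕ)) n ⊆ Finset.range (n + 1) := fun k hk => by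
    simp only [Finset.mem_Icc, Finset.mem_range] at hk ⊢; omega
  rw [of_apply, Finset.sum_subset hsub, Finset.sum_range]
  · rw [mul_apply]
    simp only [mul_diagonal, transpose_apply, physHermiteCoeffMatrix, of_apply, coeff_physHermite]
    refine Finset.sum_congr rfl fun k _ => ?_
    rw [pow_add]
    ring
  · intro k hk hk'
    have : k < i ∨ k < j := by
      simp only [Finset.mem_Icc, Finset.mem_range, max_le_iff] at hk hk'; omega
    rcases this with h | h <;> simp [Nat.choose_eq_zero_of_lt h]

/-- For every `n ≥ 0`, the `(n+1) × (n+1)` matrix with `(i,j)` entry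
`((1 + (-1)^(i+j)) / (2√π)) * Γ((i+j+1)/2)` is invertible, with inverse entries
`β_{ij} = ∑_{k = max(i,j)}^{n} 2^(i+j) C(k,i) C(k,j) H_{k-i}(0) H_{k-j}(0) / (k! 2^k)`. -/
theorem hermite_moment_matrix_inv (n : ℕ) :
    (Matrix.of fun i j : Fin (n + 1) =>
        ((1 + (-1 : ℝ) ^ ((i : ℕ) + (j : ℕ))) / (2 * Real.sqrt Real.pi)) *
          Real.Gamma (((i : ℕ) + (j : ℕ) + 1 : ℝ) / 2)) *
      (Matrix.of fun i j : Fin (n + 1) =>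
        ∑ k ∈ Finset.Icc (max (i : ℕ) (j : ℕ)) n,
          (2 : ℝ) ^ ((i : ℕ) + (j : ℕ)) * (k.choose i : ℝ) * (k.choose j : ℝ) *
            hermiteZero (k - i) * hermiteZero (k - j) /
              ((Nat.factorial k : ℝ) * 2 ^ k)) = 1 ∧
    (Matrix.of fun i j : Fin (n + 1) =>
        ∑ k ∈ Finset.Icc (max (i : ℕ) (j : ℕ)) n,
          (2 : ℝ) ^ ((i : ℕ) + (j : ℕ)) * (k.choose i : ℝ) * (k.choose j : ℝ) *
            hermiteZero (k - i) * hermiteZero (k - j) /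
              ((Nat.factorial k : ℝ) * 2 ^ k)) *
      (Matrix.of fun i j : Fin (n + 1) =>
        ((1 + (-1 : ℝ) ^ ((i : ℕ) + (j : ℕ))) / (2 * Real.sqrt Real.pi)) *
          Real.Gamma (((i : ℕ) + (j : ℕ) + 1 : ℝ) / 2)) = 1 := by
  have hmoments : (of fun i j : Fin (n + 1) =>
      ((1 + (-1 : ℝ) ^ ((i : ℕ) + (j : ℕ))) / (2 * Real.sqrt Real.pi)) *
        Real.Gamma (((i : ℕ) + (j : ℕ) + 1 : ℝ) / 2)) =
      of fun i j : Fin (n + 1) => gaussianMoment (i + j) := by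
    ext i j
    simp [gaussianMoment]
  have hdiag : (diagonal fun k : Fin (n + 1) => (2 ^ (k : ℕ) * (k : ℕ).factorial : ℝ)) *
      diagonal (fun k : Fin (n + 1) => (2 ^ (k : ℕ) * (k : ℕ).factorial : ℝ)⁻¹) = 1 := by
    rw [diagonal_mul_diagonal, ← diagonal_one]
    congr 1
    ext k
    exact mul_inv_cancel₀ (by positivity)
  have hinv := (physHermiteCoeffMatrix_isUnit (n + 1)).mul_mul_mul_eq_one_of_mul_mul_eq
    (physHermiteCoeffMatrix_mul_gaussianMoment_mul_transpose (n + 1)) hdiag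
  rw [transpose_physHermiteCoeffMatrix_mul_diagonal_mul, ← hmoments] at hinv
  exact ⟨hinv, mul_eq_one_comm.mp hinv⟩
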